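/- Let F = {0 (constant), s (arity 1), plus (arity 2), f (arity 3), g (arity 2)} and let R be the rewrite system {plus(x,0) → x, plus(x,s(y)) → s(plus(x,y)), f(0,s(0),x) → f(x,plus(x,x),x), g(x,y) → x, g(x,y) → y}. Then R is not terminating: there is an infinite →_R rewrite derivation starting from the ground term f(0, s(0), g(0, s(0))). -/
import Mathlib


namespace TRS

inductive Term (F V : Type*) where
  | var : V → Term F V
  | app : F → List (Term F V) → Term F V

namespace Term

variable {F V : Type*}

mutual
  def subst (σ : V → Term F V) : Term F V → Term F V
    | .var x => σ x
    | .app f ts => .app f (substList σ ts)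

  def substList (σ : V → Term F V) : List (Term F V) → List (Term F V)
    | [] => []
    | t :: ts => subst σ t :: substList σ ts
end

mutual
  def vars : Term F V → Set V
    | .var x => {x}
    | .app _ ts => varsList ts

  def varsList : List (Term F V) → Set V
    | [] => ∅
    | t :: ts => vars t ∪ varsList ts
end

def IsGround (t : Term F V) : Prop := vars t = ∅

def top : Term F V → Option F
  | .var _ => none
  | .app f _ => some f

def subtermAt : List ℕ → Term F V → Option (Term F V)
  | [], t => some t
  | _ :: _, .var _ => none
  | i :: p, .app _ ts =>
    match ts[i]? with
    | none => none
    | some u => subtermAt p u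

def replaceAt : List ℕ → Term F V → Term F V → Option (Term F V)
  | [], _, u => some u
  | _ :: _, .var _, _ => none
  | i :: p, .app f ts, u =>
    match ts[i]? with
    | none => none
    | some ti =>
      match replaceAt p ti u with
      | none => none
      | some ti' => some (.app f (ts.set i ti'))

inductive WF (arity : F → ℕ) : Term F V → Prop
  | var (x : V) : WF arity (.var x)
  | app (f : F) (ts : List (Term F V)) :
      ts.length = arity f → (∀ t ∈ ts, WF arity t) → WF arity (.app f ts)

inductive Occurs (f : F) : Term F V → Prop
  | head (ts : List (Term F V)) : Occurs f (.app f ts)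
  | arg {g : F} {ts : List (Term F V)} {t : Term F V} :
      t ∈ ts → Occurs f t → Occurs f (.app g ts)

end Term

open Term

structure Rule (F V : Type*) where
  lhs : Term F V
  rhs : Term F V

variable {F V : Type*}

/-- The domain of a substitution. -/
def SDom (σ : V → Term F V) : Set V := {x | σ x ≠ Term.var x}

/-- The range (variables) of a substitution. -/
def SRan (σ : V → Term F V) : Set V := ⋃ x ∈ SDom σ, vars (σ x)

/-- A ground substitution maps every variable of its domain to a ground term. -/
def GroundSubst (σ : V → Term F V) : Prop := ∀ x ∈ SDom σ, IsGround (σ x)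

/-- `R` is a rewrite system: no left-hand side is a variable, and
`Var(rhs) ⊆ Var(lhs)` for every rule. -/
def IsRS (R : List (Rule F V)) : Prop :=
  ∀ ρ ∈ R, (∀ x : V, ρ.lhs ≠ Term.var x) ∧ vars ρ.rhs ⊆ vars ρ.lhs

/-- Rewriting at position `p` with the rule `l → r`. -/
def RewriteAtWith (l r : Term F V) (p : List ℕ) (s t : Term F V) : Prop :=
  ∃ τ : V → Term F V, subtermAt p s = some (subst τ l) ∧ replaceAt p s (subst τ r) = some t

/-- Rewriting at position `p` with some rule of `R`. -/
def RewriteAt (R : List (Rule F V)) (p : List ℕ) (s t : Term F V) : Prop :=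
  ∃ ρ ∈ R, RewriteAtWith ρ.lhs ρ.rhs p s t

/-- The rewriting relation induced by `R`. -/
def Rewrite (R : List (Rule F V)) (s t : Term F V) : Prop :=
  ∃ p, RewriteAt R p s t

def ReducibleAt (R : List (Rule F V)) (s : Term F V) (p : List ℕ) : Prop :=
  ∃ t, RewriteAt R p s t

def Reducible (R : List (Rule F V)) (s : Term F V) : Prop :=
  ∃ t, Rewrite R s t

def NormalForm (R : List (Rule F V)) (s : Term F V) : Prop := ¬ Reducible R s

/-- `n` is a normal form of `s`. -/
def IsNormalFormOf (R : List (Rule F V)) (s n : Term F V) : Prop :=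
  Relation.ReflTransGen (Rewrite R) s n ∧ NormalForm R n

/-- `q` is strictly below `p` (`p` is a strict prefix of `q`). -/
def StrictBelow (p q : List ℕ) : Prop := p <+: q ∧ p ≠ q

/-- Innermost rewrite step at position `p`. -/
def InnAt (R : List (Rule F V)) (p : List ℕ) (s t : Term F V) : Prop :=
  RewriteAt R p s t ∧ ∀ q, StrictBelow p q → ¬ ReducibleAt R s q

def InnStep (R : List (Rule F V)) (s t : Term F V) : Prop := ∃ p, InnAt R p s t

/-- Outermost rewrite step at position `p`. -/
def OutAt (R : List (Rule F V)) (p : List ℕ) (s t : Term F V) : Prop :=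
  RewriteAt R p s t ∧ ∀ q, StrictBelow q p → ¬ ReducibleAt R s q

def OutStep (R : List (Rule F V)) (s t : Term F V) : Prop := ∃ p, OutAt R p s t

/-- Innermost rewrite step at position `p` with rule `l → r`. -/
def InnAtWith (R : List (Rule F V)) (l r : Term F V) (p : List ℕ) (s t : Term F V) : Prop :=
  RewriteAtWith l r p s t ∧ ∀ q, StrictBelow p q → ¬ ReducibleAt R s q

/-- Outermost rewrite step at position `p` with rule `l → r`. -/
def OutAtWith (R : List (Rule F V)) (l r : Term F V) (p : List ℕ) (s t : Term F V) : Prop :=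
  RewriteAtWith l r p s t ∧ ∀ q, StrictBelow q p → ¬ ReducibleAt R s q

/-- No infinite innermost derivation starts from `t`. -/
def InnTerminates (R : List (Rule F V)) (t : Term F V) : Prop :=
  ¬ ∃ f : ℕ → Term F V, f 0 = t ∧ ∀ n, InnStep R (f n) (f (n + 1))

/-- No infinite outermost derivation starts from `t`. -/
def OutTerminates (R : List (Rule F V)) (t : Term F V) : Prop :=
  ¬ ∃ f : ℕ → Term F V, f 0 = t ∧ ∀ n, OutStep R (f n) (f (n + 1))

def Unifies (σ : V → Term F V) (u v : Term F V) : Prop := subst σ u = subst σ v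

/-- `σ` is a most general unifier of `u` and `v`. -/
def IsMGU (u v : Term F V) (σ : V → Term F V) : Prop :=
  Unifies σ u v ∧
    ∀ τ : V → Term F V, Unifies τ u v → ∃ ρ : V → Term F V, ∀ x, subst ρ (σ x) = τ x

/-- The usable rules of a term (least set closed under the defining equations). -/
inductive Usable (R : List (Rule F V)) (XA : Set V) : Term F V → Rule F V → Prop
  | var {x : V} {ρ : Rule F V} : x ∉ XA → ρ ∈ R → Usable R XA (Term.var x) ρ
  | rls {f : F} {ts : List (Term F V)} {ρ : Rule F V} :
      ρ ∈ R → Term.top ρ.lhs = some f → Usable R XA (Term.app f ts) ρ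
  | arg {f : F} {ts : List (Term F V)} {t : Term F V} {ρ : Rule F V} :
      t ∈ ts → Usable R XA t ρ → Usable R XA (Term.app f ts) ρ
  | rhs {f : F} {ts : List (Term F V)} {ρ' ρ : Rule F V} :
      ρ' ∈ R → Term.top ρ'.lhs = some f → Usable R XA ρ'.rhs ρ → Usable R XA (Term.app f ts) ρ

/-- The signature F = {0, s:1, plus:2, f:3, g:2}. -/
inductive F16 : Type
  | zero | s | plus | f | g

def arity16 : F16 → ℕ
  | .zero => 0
  | .s => 1
  | .plus => 2
  | .f => 3
  | .g => 2

/-- The system {plus(x,0) → x, plus(x,s(y)) → s(plus(x,y)),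
f(0,s(0),x) → f(x,plus(x,x),x), g(x,y) → x, g(x,y) → y}. -/
def R16 : List (Rule F16 ℕ) :=
  [ ⟨.app .plus [.var 0, .app .zero []], .var 0⟩,
    ⟨.app .plus [.var 0, .app .s [.var 1]], .app .s [.app .plus [.var 0, .var 1]]⟩,
    ⟨.app .f [.app .zero [], .app .s [.app .zero []], .var 0],
      .app .f [.var 0, .app .plus [.var 0, .var 0], .var 0]⟩,
    ⟨.app .g [.var 0, .var 1], .var 0⟩,
    ⟨.app .g [.var 0, .var 1], .var 1⟩ ]

/-- The ground term f(0, s(0), g(0, s(0))). -/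
def start16 : Term F16 ℕ :=
  .app .f [.app .zero [], .app .s [.app .zero []],
    .app .g [.app .zero [], .app .s [.app .zero []]]]

/-- g(0,s(0)) -/
def G16 : Term F16 ℕ := .app .g [.app .zero [], .app .s [.app .zero []]]

def cyc16 : ℕ → Term F16 ℕ
  | 0 => start16
  | 1 => .app .f [G16, .app .plus [G16, G16], G16]
  | 2 => .app .f [.app .zero [], .app .plus [G16, G16], G16]
  | 3 => .app .f [.app .zero [], .app .plus [G16, .app .s [.app .zero []]], G16]
  | 4 => .app .f [.app .zero [], .app .s [.app .plus [G16, .app .zero []]], G16]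
  | _ => .app .f [.app .zero [], .app .s [G16], G16]

def gsub : ℕ → Term F16 ℕ := fun _ => G16

def gs01 : ℕ → Term F16 ℕ := fun i => if i = 0 then .app .zero [] else .app .s [.app .zero []]

lemma step0 : Rewrite R16 (cyc16 0) (cyc16 1) :=
  ⟨[], ⟨.app .f [.app .zero [], .app .s [.app .zero []], .var 0],
      .app .f [.var 0, .app .plus [.var 0, .var 0], .var 0]⟩,
    by simp [R16], gsub, rfl, rfl⟩

lemma step1 : Rewrite R16 (cyc16 1) (cyc16 2) :=
  ⟨[0], ⟨.app .g [.var 0, .var 1], .var 0⟩, by simp [R16], gs01, rfl, rfl⟩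

lemma step2 : Rewrite R16 (cyc16 2) (cyc16 3) :=
  ⟨[1, 1], ⟨.app .g [.var 0, .var 1], .var 1⟩, by simp [R16], gs01, rfl, rfl⟩

lemma step3 : Rewrite R16 (cyc16 3) (cyc16 4) :=
  ⟨[1], ⟨.app .plus [.var 0, .app .s [.var 1]],
      .app .s [.app .plus [.var 0, .var 1]]⟩,
    by simp [R16], fun i => if i = 0 then G16 else .app .zero [], rfl, rfl⟩

lemma step4 : Rewrite R16 (cyc16 4) (cyc16 5) :=
  ⟨[1, 0], ⟨.app .plus [.var 0, .app .zero []], .var 0⟩, by simp [R16], gsub, rfl, rfl⟩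

lemma step5 : Rewrite R16 (cyc16 5) (cyc16 0) :=
  ⟨[1, 0], ⟨.app .g [.var 0, .var 1], .var 0⟩, by simp [R16], gs01, rfl, rfl⟩

/-- R16 is not terminating — there is an infinite rewrite derivation
starting from the ground term f(0, s(0), g(0, s(0))). -/
theorem R16_nonterminating :
    ∃ seq : ℕ → Term F16 ℕ, seq 0 = start16 ∧ ∀ n, Rewrite R16 (seq n) (seq (n + 1)) := by
  refine ⟨fun n => cyc16 (n % 6), by rfl, fun n => ?_⟩
  show Rewrite R16 (cyc16 (n % 6)) (cyc16 ((n + 1) % 6))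
  have h : n % 6 = 0 ∧ (n+1) % 6 = 1 ∨ n % 6 = 1 ∧ (n+1) % 6 = 2 ∨ n % 6 = 2 ∧ (n+1) % 6 = 3 ∨
      n % 6 = 3 ∧ (n+1) % 6 = 4 ∨ n % 6 = 4 ∧ (n+1) % 6 = 5 ∨ n % 6 = 5 ∧ (n+1) % 6 = 0 := by
    omega
  rcases h with ⟨h1, h2⟩ | ⟨h1, h2⟩ | ⟨h1, h2⟩ | ⟨h1, h2⟩ | ⟨h1, h2⟩ | ⟨h1, h2⟩ <;>
    · rw [h1, h2]
      first
        | exact step0 | exact step1 | exact step2 | exact step3 | exact step4 | exact step5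

end TRS
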